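/- In K_{n,n} = G[X,Y], let S be a k-subset with S∩X = {s_1,…,s_r} and S∩Y = {s_{r+1},…,s_k}, 1 ≤ r ≤ k−1. Then there exist at least min{⌊(n−r)/(k−r)⌋, ⌊(n−(k−r))/r⌋} ≥ ⌊(n−1)/(k−1)⌋ internally disjoint S-paths in K_{n,n}, each of length 2k−1. -/

import Mathlib

/-!
The `i`-th path is `s₁ y₁ ⋯ s_r y_r x₁ s_{r+1} ⋯ x_{k-r} s_k`: it alternates between the two
sides, visits the `r` left vertices of `S` first and the `k - r` right ones last, and its
internal vertices `x`, `y` are fresh vertices reserved for it alone. Two such paths meet exactly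
in `S`, and no edge of a path joins two vertices of `S`, so they share no edge either. Reserving
`N (k - r)` left and `N r` right vertices outside `S` is possible for `N = ⌊(n - 1)/(k - 1)⌋`,
because `N (k - 1) ≤ n - 1` and `r, k - r ≥ 1`.
-/

open SimpleGraph

/-- `T` is an `S`-tree in `G`: a subtree of `G` containing all vertices of `S`. -/
def IsSTree {V : Type*} (G : SimpleGraph V) (S : Set V) (T : G.Subgraph) : Prop :=
  T.coe.IsTree ∧ S ⊆ T.verts

/-- A family of subgraphs is internally disjoint with respect to `S`:
pairwise edge-disjoint, and pairwise vertex intersection exactly `S`. -/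
def InternallyDisjoint {V ι : Type*} {G : SimpleGraph V} (S : Set V)
    (T : ι → G.Subgraph) : Prop :=
  ∀ i j, i ≠ j → (T i).edgeSet ∩ (T j).edgeSet = ∅ ∧ (T i).verts ∩ (T j).verts = S

/-- `T` is a path subgraph with `m` edges: its vertices are `v 0, …, v m` for some injective
`v` and its edges are exactly the consecutive pairs. -/
def IsPathSubgraph {V : Type*} {G : SimpleGraph V} (T : G.Subgraph) (m : ℕ) : Prop :=
  ∃ v : Fin (m + 1) → V, Function.Injective v ∧ T.verts = Set.range v ∧
    ∀ a b, T.Adj a b ↔ ∃ i : Fin m,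
      (v i.castSucc = a ∧ v i.succ = b) ∨ (v i.castSucc = b ∧ v i.succ = a)

open Set Function

namespace Fin

variable {α : Type*} {m n : ℕ}

theorem range_append (u : Fin m → α) (v : Fin n → α) :
    range (append u v) = range u ∪ range v := by
  ext x
  constructor
  · rintro ⟨i, rfl⟩
    induction i using addCases <;> simp
  · rintro (⟨i, rfl⟩ | ⟨i, rfl⟩)
    exacts [⟨castAdd n i, append_left u v i⟩, ⟨natAdd m i, append_right u v i⟩]

theorem lt_of_append_mem_range_left {u : Fin m → α} {v : Fin n → α}
    (huv : Disjoint (range u) (range v)) {i : Fin (m + n)} (hi : append u v i ∈ range u) :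
    (i : ℕ) < m := by
  induction i using addCases with
  | left i => exact i.isLt
  | right i =>
    rw [append_right] at hi
    exact absurd (mem_range_self i) (disjoint_left.mp huv hi)

theorem le_of_append_mem_range_right {u : Fin m → α} {v : Fin n → α}
    (huv : Disjoint (range u) (range v)) {i : Fin (m + n)} (hi : append u v i ∈ range v) :
    m ≤ (i : ℕ) := by
  induction i using addCases with
  | left i =>
    rw [append_left] at hi
    exact absurd (mem_range_self i) (disjoint_right.mp huv hi)
  | right i => simp

end Fin

section Zigzag

variable {α β : Type*} {k : ℕ}

def zigzag (L : Fin k → α) (R : Fin k → β) (j : Fin (2 * k)) : α ⊕ β :=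
  if j.val % 2 = 0 then .inl (L ⟨j / 2, by omega⟩) else .inr (R ⟨j / 2, by omega⟩)

variable {L : Fin k → α} {R : Fin k → β}

theorem zigzag_injective (hL : Injective L) (hR : Injective R) : Injective (zigzag L R) := by
  intro i j h
  unfold zigzag at h
  split_ifs at h with hi hj hj
  · have := Fin.mk.inj_iff.mp (hL (Sum.inl_injective h))
    exact Fin.ext (by omega)
  · have := Fin.mk.inj_iff.mp (hR (Sum.inr_injective h))
    exact Fin.ext (by omega)

theorem range_zigzag (L : Fin k → α) (R : Fin k → β) :
    range (zigzag L R) = Sum.inl '' range L ∪ Sum.inr '' range R := by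
  ext x
  constructor
  · rintro ⟨j, rfl⟩
    unfold zigzag
    split_ifs
    exacts [Or.inl (mem_image_of_mem _ (mem_range_self _)),
      Or.inr (mem_image_of_mem _ (mem_range_self _))]
  · rintro (⟨_, ⟨t, rfl⟩, rfl⟩ | ⟨_, ⟨t, rfl⟩, rfl⟩)
    · exact ⟨⟨2 * t, by omega⟩, by simp [zigzag]⟩
    · refine ⟨⟨2 * t + 1, by omega⟩, ?_⟩
      simp only [zigzag, if_neg (show (2 * t.val + 1) % 2 ≠ 0 by omega)]
      congr 2
      exact Fin.ext (by dsimp only; omega)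

theorem zigzag_succ (L : Fin k → α) (R : Fin k → β) {j j' : Fin (2 * k)} (h : j'.val = j + 1) :
    (∃ t, zigzag L R j = .inl (L t) ∧ zigzag L R j' = .inr (R t)) ∨
      ∃ t t' : Fin k, t'.val = t + 1 ∧ zigzag L R j = .inr (R t) ∧ zigzag L R j' = .inl (L t') := by
  unfold zigzag
  by_cases hj : j.val % 2 = 0
  · left
    refine ⟨⟨j / 2, by omega⟩, if_pos hj, ?_⟩
    rw [if_neg (by omega)]
    congr 3; omega
  · right
    refine ⟨⟨j / 2, by omega⟩, ⟨j' / 2, by omega⟩, by dsimp only; omega, if_neg hj,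
      if_pos (by omega)⟩

theorem completeBipartiteGraph_adj_zigzag (L : Fin k → α) (R : Fin k → β) {j j' : Fin (2 * k)}
    (h : j'.val = j + 1) : (completeBipartiteGraph α β).Adj (zigzag L R j) (zigzag L R j') := by
  rcases zigzag_succ L R h with ⟨t, hj, hj'⟩ | ⟨t, t', -, hj, hj'⟩ <;> simp [hj, hj']

end Zigzag

namespace SimpleGraph

theorem pathGraph_isTree (m : ℕ) : (pathGraph (m + 1)).IsTree := by
  rw [isTree_iff_connected_and_card]
  refine ⟨pathGraph_connected m, ?_⟩
  have hedges : (pathGraph (m + 1)).edgeSet = range fun i : Fin m ↦ s(i.castSucc, i.succ) := by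
    ext e
    induction e using Sym2.ind with
    | _ a b =>
      simp only [mem_edgeSet, pathGraph_adj, mem_range, Sym2.eq_iff, Fin.ext_iff]
      constructor
      · rintro (h | h)
        · exact ⟨⟨a, by omega⟩, by simp only [Fin.val_castSucc, Fin.val_succ, true_and]; omega⟩
        · exact ⟨⟨b, by omega⟩, by simp only [Fin.val_castSucc, Fin.val_succ, true_and]; omega⟩
      · rintro ⟨i, h⟩
        simp only [Fin.val_castSucc, Fin.val_succ] at h
        omega
  have hinj : Injective fun i : Fin m ↦ s(i.castSucc, i.succ) := by
    intro i j h
    simp only [Sym2.eq_iff, Fin.ext_iff, Fin.val_castSucc, Fin.val_succ] at h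
    exact Fin.ext (by omega)
  rw [hedges, Nat.card_range_of_injective hinj, Nat.card_fin, Nat.card_fin]

variable {V : Type*} {G : SimpleGraph V} {m : ℕ}

theorem IsPathSubgraph.coe_isTree {T : G.Subgraph} (hT : IsPathSubgraph T m) : T.coe.IsTree := by
  obtain ⟨v, hinj, hverts, hadj⟩ := hT
  have hpath : ∀ a b, T.Adj (v a) (v b) ↔ (pathGraph (m + 1)).Adj a b := by
    intro a b
    simp only [hadj, hinj.eq_iff, pathGraph_adj, Fin.ext_iff]
    constructor
    · rintro ⟨i, ⟨h1, h2⟩ | ⟨h1, h2⟩⟩ <;>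
        simp only [Fin.val_castSucc, Fin.val_succ] at h1 h2 <;> omega
    · rintro (h | h)
      · exact ⟨⟨a, by omega⟩, Or.inl ⟨rfl, by simp only [Fin.val_succ]; omega⟩⟩
      · exact ⟨⟨b, by omega⟩, Or.inr ⟨rfl, by simp only [Fin.val_succ]; omega⟩⟩
  let e : pathGraph (m + 1) ≃g T.coe :=
    ⟨(Equiv.ofInjective v hinj).trans (Equiv.setCongr hverts.symm), hpath _ _⟩
  exact e.isTree_iff.mp (pathGraph_isTree m)

def Subgraph.ofChain (v : Fin (m + 1) → V) (hv : ∀ i : Fin m, G.Adj (v i.castSucc) (v i.succ)) :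
    G.Subgraph where
  verts := range v
  Adj a b := ∃ i : Fin m, (v i.castSucc = a ∧ v i.succ = b) ∨ (v i.castSucc = b ∧ v i.succ = a)
  adj_sub := by
    rintro a b ⟨i, ⟨rfl, rfl⟩ | ⟨rfl, rfl⟩⟩
    exacts [hv i, (hv i).symm]
  edge_vert := by
    rintro a b ⟨i, ⟨rfl, -⟩ | ⟨-, rfl⟩⟩ <;> exact mem_range_self _
  symm := ⟨fun _ _ ↦ Exists.imp fun _ ↦ Or.symm⟩

theorem isPathSubgraph_ofChain {v : Fin (m + 1) → V} (hinj : Injective v)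
    (hv : ∀ i : Fin m, G.Adj (v i.castSucc) (v i.succ)) :
    IsPathSubgraph (Subgraph.ofChain v hv) m :=
  ⟨v, hinj, rfl, fun _ _ ↦ Iff.rfl⟩

theorem internallyDisjoint_of_verts_inter {ι : Type*} {S : Set V} {T : ι → G.Subgraph}
    (hverts : Pairwise fun i j ↦ (T i).verts ∩ (T j).verts = S)
    (hedge : ∀ i a b, (T i).Adj a b → a ∈ S → b ∉ S) : InternallyDisjoint S T := by
  refine fun i j hij ↦ ⟨eq_empty_iff_forall_notMem.mpr fun e ⟨hi, hj⟩ ↦ ?_, hverts hij⟩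
  induction e using Sym2.ind with
  | _ a b =>
    rw [Subgraph.mem_edgeSet] at hi hj
    have ha : a ∈ S := hverts hij ▸ ⟨hi.fst_mem, hj.fst_mem⟩
    have hb : b ∈ S := hverts hij ▸ ⟨hi.snd_mem, hj.snd_mem⟩
    exact hedge i a b hi ha hb

end SimpleGraph

theorem Set.image_inl_union_image_inr_inter {α β : Type*} (P P' : Set α) (Q Q' : Set β) :
    (Sum.inl '' P ∪ Sum.inr '' Q) ∩ (Sum.inl '' P' ∪ Sum.inr '' Q') =
      Sum.inl '' (P ∩ P') ∪ Sum.inr '' (Q ∩ Q') :=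
  (sumEquiv.symm.map_inf (P, Q) (P', Q')).symm

theorem disjoint_range_comp_prodMk {ι κ α : Type*} {x : ι × κ → α} (hx : Injective x) {i j : ι}
    (hij : i ≠ j) : Disjoint (range (x ∘ Prod.mk i)) (range (x ∘ Prod.mk j)) :=
  disjoint_range_iff.mpr fun _ _ h ↦ hij (congrArg Prod.fst (hx h))

section CompleteBipartite

variable {α β ι : Type*} {r s : ℕ} {a : Fin r → α} {b : Fin s → β} {x : ι × Fin s → α}
  {y : ι × Fin r → β}

variable (a b x y) in
/-- With `a` and `b` enumerating the two sides of `S`, this is the paper's path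
`s₁ y₁ ⋯ s_r y_r x₁ s_{r+1} ⋯ x_s s_{r+s}`, whose internal vertices `y (i, ·)` and `x (i, ·)`
belong to the `i`-th path alone. -/
def sPathSeq (i : ι) : Fin (2 * (r + s)) → α ⊕ β :=
  zigzag (Fin.append a (x ∘ Prod.mk i)) (Fin.append (y ∘ Prod.mk i) b)

theorem range_sPathSeq (i : ι) :
    range (sPathSeq a b x y i) =
      Sum.inl '' (range a ∪ range (x ∘ Prod.mk i)) ∪
        Sum.inr '' (range (y ∘ Prod.mk i) ∪ range b) := by
  rw [sPathSeq, range_zigzag, Fin.range_append, Fin.range_append]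

theorem subset_range_sPathSeq (i : ι) :
    Sum.inl '' range a ∪ Sum.inr '' range b ⊆ range (sPathSeq a b x y i) := by
  rw [range_sPathSeq]
  exact union_subset_union (image_mono subset_union_left) (image_mono subset_union_right)

theorem range_sPathSeq_inter (hx : Injective x) (hy : Injective y) {i j : ι} (hij : i ≠ j) :
    range (sPathSeq a b x y i) ∩ range (sPathSeq a b x y j) =
      Sum.inl '' range a ∪ Sum.inr '' range b := by
  have hX := disjoint_range_comp_prodMk hx hij
  have hY := disjoint_range_comp_prodMk hy hij
  rw [range_sPathSeq, range_sPathSeq, image_inl_union_image_inr_inter, ← union_inter_distrib_left,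
    ← inter_union_distrib_right, hX.inter_eq, hY.inter_eq, union_empty, empty_union]

theorem sPathSeq_injective (ha : Injective a) (hb : Injective b) (hx : Injective x)
    (hy : Injective y) (hxa : Disjoint (range a) (range x)) (hyb : Disjoint (range y) (range b))
    (i : ι) : Injective (sPathSeq a b x y i) :=
  zigzag_injective
    (Fin.append_injective_iff.mpr ⟨ha, hx.comp (Prod.mk_right_injective i),
      disjoint_range_iff.mp (hxa.mono_right (range_comp_subset_range _ _))⟩)
    (Fin.append_injective_iff.mpr ⟨hy.comp (Prod.mk_right_injective i), hb,
      disjoint_range_iff.mp (hyb.mono_left (range_comp_subset_range _ _))⟩)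

theorem sPathSeq_succ_notMem_of_mem (hxa : Disjoint (range a) (range x))
    (hyb : Disjoint (range y) (range b)) (i : ι) {j j' : Fin (2 * (r + s))} (h : j'.val = j + 1) :
    sPathSeq a b x y i j ∈ Sum.inl '' range a ∪ Sum.inr '' range b →
      sPathSeq a b x y i j' ∉ Sum.inl '' range a ∪ Sum.inr '' range b := by
  have hL := @Fin.lt_of_append_mem_range_left _ _ _ _ _
    (hxa.mono_right (range_comp_subset_range (Prod.mk i) x))
  have hR := @Fin.le_of_append_mem_range_right _ _ _ _ _
    (hyb.mono_left (range_comp_subset_range (Prod.mk i) y))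
  rcases zigzag_succ _ _ h with ⟨t, h1, h2⟩ | ⟨t, t', htt, h1, h2⟩ <;>
    rw [sPathSeq, h1, h2] <;>
    simp only [mem_union, Sum.inl_injective.mem_set_image, Sum.inr_injective.mem_set_image,
      mem_image, reduceCtorEq, and_false, exists_false, or_false, false_or]
  · exact fun hl hr ↦ (hR hr).not_gt (hL hl)
  · intro hr hl
    have := hR hr
    have := hL hl
    omega

variable (a b x y) in
def sPath (hrs : 0 < r + s) (i : ι) : (completeBipartiteGraph α β).Subgraph :=
  Subgraph.ofChain (sPathSeq a b x y i ∘ finCongr (by omega : 2 * (r + s) - 1 + 1 = 2 * (r + s)))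
    fun _ ↦ completeBipartiteGraph_adj_zigzag _ _ (by simp)

theorem exists_internallyDisjoint_sPaths (hrs : 0 < r + s) (ha : Injective a) (hb : Injective b)
    (hx : Injective x) (hy : Injective y) (hxa : Disjoint (range a) (range x))
    (hyb : Disjoint (range y) (range b)) :
    ∃ T : ι → (completeBipartiteGraph α β).Subgraph,
      (∀ i, IsSTree (completeBipartiteGraph α β) (Sum.inl '' range a ∪ Sum.inr '' range b) (T i) ∧
        IsPathSubgraph (T i) (2 * (r + s) - 1)) ∧
      InternallyDisjoint (Sum.inl '' range a ∪ Sum.inr '' range b) T := by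
  have hverts (i : ι) : (sPath a b x y hrs i).verts = range (sPathSeq a b x y i) :=
    (finCongr _).surjective.range_comp _
  have hpath (i : ι) : IsPathSubgraph (sPath a b x y hrs i) (2 * (r + s) - 1) :=
    isPathSubgraph_ofChain
      ((sPathSeq_injective ha hb hx hy hxa hyb i).comp (finCongr _).injective) _
  refine ⟨sPath a b x y hrs, fun i ↦ ⟨⟨(hpath i).coe_isTree, ?_⟩, hpath i⟩,
    internallyDisjoint_of_verts_inter (fun i j hij ↦ ?_) ?_⟩
  · exact (hverts i).symm ▸ subset_range_sPathSeq i
  · simp only [hverts, range_sPathSeq_inter hx hy hij]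
  · rintro i _ _ ⟨t, ⟨rfl, rfl⟩ | ⟨rfl, rfl⟩⟩ h
    · exact sPathSeq_succ_notMem_of_mem hxa hyb i (by simp) h
    · exact fun h' ↦ sPathSeq_succ_notMem_of_mem hxa hyb i (by simp) h' h

end CompleteBipartite

theorem Finset.exists_injective_disjoint_range {ι α : Type*} [Fintype ι] [Fintype α]
    [DecidableEq α] (A : Finset α) (h : Fintype.card ι ≤ Fintype.card α - A.card) :
    ∃ f : ι → α, Injective f ∧ Disjoint (A : Set α) (Set.range f) := by
  obtain ⟨e⟩ := Function.Embedding.nonempty_of_card_le (α := ι) (β := ↥(Aᶜ))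
    (by rwa [Fintype.card_coe, card_compl])
  refine ⟨fun i ↦ e i, Subtype.val_injective.comp e.injective, ?_⟩
  rw [Set.disjoint_right]
  rintro _ ⟨i, rfl⟩
  exact mem_compl.mp (e i).2

theorem mul_le_sub_of_mul_add_pred_le {N n r s : ℕ} (hN : N * (r + s - 1) ≤ n - 1) (hr : 1 ≤ r) :
    N * s ≤ n - r := by
  rcases N.eq_zero_or_pos with rfl | hN0
  · simp
  have hsplit : N * (r + s - 1) = N * s + N * (r - 1) := by rw [← Nat.mul_add]; congr 1; omega
  have : r - 1 ≤ N * (r - 1) := Nat.le_mul_of_pos_left _ hN0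
  omega

theorem bipartite_internally_disjoint_paths_general (n k r : ℕ)
    (S : Finset (Fin n ⊕ Fin n)) (hS : S.card = k)
    (hr : (S.filter (fun x => x.isLeft = true)).card = r)
    (hr1 : 1 ≤ r) (hr2 : r ≤ k - 1) :
    ∃ T : Fin ((n - 1) / (k - 1)) → (completeBipartiteGraph (Fin n) (Fin n)).Subgraph,
      (∀ i, IsSTree (completeBipartiteGraph (Fin n) (Fin n)) (S : Set (Fin n ⊕ Fin n)) (T i) ∧
        IsPathSubgraph (T i) (2 * k - 1)) ∧
      InternallyDisjoint (S : Set (Fin n ⊕ Fin n)) T := by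
  obtain ⟨s, rfl⟩ : ∃ s, k = r + s := ⟨k - r, by omega⟩
  set N := (n - 1) / (r + s - 1)
  have hN : N * (r + s - 1) ≤ n - 1 := Nat.div_mul_le_self _ _
  have hleft : S.toLeft.card = r := by
    rw [← hr, ← Finset.card_map Embedding.inl]
    congr 1
    ext (z | z) <;> simp
  have hright : S.toRight.card = s := by
    have := S.card_toLeft_add_card_toRight
    omega
  obtain ⟨x, hx, hxa⟩ := S.toLeft.exists_injective_disjoint_range (ι := Fin N × Fin s)
    (by simpa [hleft] using mul_le_sub_of_mul_add_pred_le hN hr1)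
  obtain ⟨y, hy, hyb⟩ := S.toRight.exists_injective_disjoint_range (ι := Fin N × Fin r)
    (by simpa [hright] using mul_le_sub_of_mul_add_pred_le (by rwa [add_comm]) (by omega))
  have hsides : (S : Set (Fin n ⊕ Fin n)) = Sum.inl '' ↑S.toLeft ∪ Sum.inr '' ↑S.toRight := by
    ext (z | z) <;> simp
  rw [← S.toLeft.range_orderEmbOfFin hleft] at hsides hxa
  rw [← S.toRight.range_orderEmbOfFin hright] at hsides hyb
  rw [hsides]
  exact exists_internallyDisjoint_sPaths (by omega) (S.toLeft.orderEmbOfFin hleft).injective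
    (S.toRight.orderEmbOfFin hright).injective hx hy hxa hyb.symm

/-- In `K_{n,n}`, if `S` is a `k`-set of vertices with `r` vertices on the left side and
`k − r` on the right, `1 ≤ r ≤ k − 1`, then there exist at least `⌊(n−1)/(k−1)⌋` internally
disjoint `S`-paths, each of length `2k−1`. -/
theorem bipartite_internally_disjoint_paths (n k r : ℕ) (hk : 3 ≤ k)
    (S : Finset (Fin n ⊕ Fin n)) (hS : S.card = k)
    (hr : (S.filter (fun x => x.isLeft = true)).card = r)
    (hr1 : 1 ≤ r) (hr2 : r ≤ k - 1) :
    ∃ T : Fin ((n - 1) / (k - 1)) → (completeBipartiteGraph (Fin n) (Fin n)).Subgraph,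
      (∀ i, IsSTree (completeBipartiteGraph (Fin n) (Fin n)) (S : Set (Fin n ⊕ Fin n)) (T i) ∧
        IsPathSubgraph (T i) (2 * k - 1)) ∧
      InternallyDisjoint (S : Set (Fin n ⊕ Fin n)) T :=
  bipartite_internally_disjoint_paths_general n k r S hS hr hr1 hr2
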